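/- arXiv:1909.01318 — 12 statements merged into one kernel-verified Lean document; each statement's English description precedes it below -/
import Mathlib

section
/- If a (2n+1)-dimensional Sasakian manifold (M, φ, ξ, η, g) admits a *-conformal η-Ricci soliton, i.e. £_ξ g + 2S* + [2λ - (p + 2/(2n+1))]g + 2μ η⊗η = 0, then the constants satisfy λ + μ = (1/2)(p + 2/(2n+1)). -/
/-- If a (2n+1)-dimensional Sasakian manifold admits a *-conformal η-Ricci soliton,
then λ + μ = (1/2)(p + 2/(2n+1)). -/
theorem star_conformal_eta_ricci_soliton_constants
    {V : Type*} (n : ℕ) (hn : 1 ≤ n)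
    (g S Sstar lieG : V → V → ℝ) (η : V → ℝ) (ξ : V)
    (lam μ p : ℝ)
    -- ξ is Killing on a Sasakian manifold: £_ξ g = 0
    (hKilling : ∀ X Y, lieG X Y = 0)
    -- *-Ricci tensor on a Sasakian manifold
    (hStar : ∀ X Y, Sstar X Y = S X Y - (2 * (n : ℝ) - 1) * g X Y - η X * η Y)
    -- S(X, ξ) = 2n η(X) on a Sasakian manifold
    (hSξ : ∀ X, S X ξ = 2 * (n : ℝ) * η X)
    (hgξ : ∀ X, g X ξ = η X)
    (hηξ : η ξ = 1)
    -- the *-conformal η-Ricci soliton equation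
    (hsol : ∀ X Y, lieG X Y + 2 * Sstar X Y
        + (2 * lam - (p + 2 / (2 * (n : ℝ) + 1))) * g X Y + 2 * μ * η X * η Y = 0) :
    lam + μ = (1 / 2) * (p + 2 / (2 * (n : ℝ) + 1)) := by
  have h := hsol ξ ξ
  rw [hKilling, hStar, hSξ, hgξ, hηξ] at h
  nlinarith [h]
end

section
/- On a (2n+1)-dimensional Sasakian manifold admitting a *-conformal η-Ricci soliton, the Ricci tensor is given by S(X,Y) = [2n - 1 - λ + (1/2)(p + 2/(2n+1))] g(X,Y) - (μ-1) η(X)η(Y) for all vector fields X, Y; in particular the manifold is η-Einstein. -/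
/-- On a (2n+1)-dimensional Sasakian manifold admitting a *-conformal η-Ricci soliton,
S(X,Y) = [2n-1-λ+(1/2)(p+2/(2n+1))] g(X,Y) - (μ-1) η(X)η(Y); in particular
the manifold is η-Einstein. -/
theorem star_conformal_eta_ricci_soliton_eta_einstein
    {V : Type*} (n : ℕ) (hn : 1 ≤ n)
    (g S Sstar lieG : V → V → ℝ) (η : V → ℝ) (ξ : V)
    (lam μ p : ℝ)
    (hKilling : ∀ X Y, lieG X Y = 0)
    (hStar : ∀ X Y, Sstar X Y = S X Y - (2 * (n : ℝ) - 1) * g X Y - η X * η Y)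
    (hgξ : ∀ X, g X ξ = η X)
    (hηξ : η ξ = 1)
    (hsol : ∀ X Y, lieG X Y + 2 * Sstar X Y
        + (2 * lam - (p + 2 / (2 * (n : ℝ) + 1))) * g X Y + 2 * μ * η X * η Y = 0) :
    (∀ X Y, S X Y = (2 * (n : ℝ) - 1 - lam + (1 / 2) * (p + 2 / (2 * (n : ℝ) + 1))) * g X Y
        - (μ - 1) * η X * η Y)
      ∧ ∃ a b : ℝ, ∀ X Y, S X Y = a * g X Y + b * η X * η Y := by
  have key : ∀ X Y, S X Y = (2 * (n : ℝ) - 1 - lam + (1 / 2) * (p + 2 / (2 * (n : ℝ) + 1))) * g X Y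
      - (μ - 1) * η X * η Y := by
    intro X Y
    have h := hsol X Y
    rw [hKilling, hStar] at h
    linarith
  refine ⟨key, 2 * (n : ℝ) - 1 - lam + (1 / 2) * (p + 2 / (2 * (n : ℝ) + 1)), -(μ - 1),
    fun X Y => by rw [key X Y]; ring⟩
end

section
/- If a (2n+1)-dimensional Sasakian manifold admitting a *-conformal η-Ricci soliton satisfies R(ξ,X)·S = 0 (i.e. S(R(ξ,X)Y, Z) + S(Y, R(ξ,X)Z) = 0 for all X, Y, Z), then μ = 1 and λ = (1/2)(p + 2/(2n+1)) - 1. -/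
/-- If a (2n+1)-dimensional Sasakian manifold admitting a *-conformal η-Ricci soliton
satisfies R(ξ,X)·S = 0, then μ = 1 and λ = (1/2)(p + 2/(2n+1)) - 1. -/
theorem curvature_derivation_ricci_vanishes_constants
    {V : Type*} [AddCommGroup V] [Module ℝ V] (n : ℕ) (hn : 1 ≤ n)
    (g S : V →ₗ[ℝ] V →ₗ[ℝ] ℝ) (ξ : V) (η : V → ℝ)
    (lam μ p : ℝ)
    (hη : ∀ X, η X = g X ξ) (hηξ : η ξ = 1)
    (hgsymm : ∀ X Y, g X Y = g Y X)
    -- the soliton forces this form of the Ricci tensor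
    (hS : ∀ X Y, S X Y = (2 * (n : ℝ) - 1 - lam + (1 / 2) * (p + 2 / (2 * (n : ℝ) + 1))) * g X Y
        - (μ - 1) * η X * η Y)
    (hlm : lam + μ = (1 / 2) * (p + 2 / (2 * (n : ℝ) + 1)))
    -- g(φ·,φ·) = g - η⊗η is not identically zero
    (hnd : ∃ X Y, g X Y - η X * η Y ≠ 0)
    -- R(ξ,X)·S = 0, where R(ξ,X)Y = g(X,Y)ξ - η(Y)X on a Sasakian manifold
    (hcond : ∀ X Y Z : V,
      S (g X Y • ξ - η Y • X) Z + S Y (g X Z • ξ - η Z • X) = 0) :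
    μ = 1 ∧ lam = (1 / 2) * (p + 2 / (2 * (n : ℝ) + 1)) - 1 := by
  obtain ⟨X, Y, hXY⟩ := hnd
  have h := hcond X Y ξ
  simp only [map_sub, map_smul, LinearMap.sub_apply, LinearMap.smul_apply, smul_eq_mul] at h
  have hgξξ : g ξ ξ = 1 := by rw [← hη]; exact hηξ
  rw [hS ξ ξ, hS X ξ, hS Y ξ, hS Y X, hηξ, hη X, hη Y, hgξξ, hgsymm Y X] at h
  have hb : μ - 1 = 0 := by
    have key : (μ - 1) * (g X Y - g X ξ * g Y ξ) = 0 := by ring_nf at h ⊢; linarith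
    rcases mul_eq_zero.1 key with h1 | h2
    · exact h1
    · exact absurd (by rw [hη X, hη Y]; exact h2) hXY
  constructor
  · linarith
  · linarith
end

section
/- If a (2n+1)-dimensional Sasakian manifold admitting a *-conformal η-Ricci soliton satisfies R(ξ,X)·S = 0, then it is an Einstein manifold with S(X,Y) = 2n g(X,Y) for all X, Y. -/
/-- If a (2n+1)-dimensional Sasakian manifold admitting a *-conformal η-Ricci soliton
satisfies R(ξ,X)·S = 0, then it is Einstein: S(X,Y) = 2n g(X,Y). -/
theorem curvature_derivation_ricci_vanishes_einstein
    {V : Type*} [AddCommGroup V] [Module ℝ V] (n : ℕ) (hn : 1 ≤ n)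
    (g S : V →ₗ[ℝ] V →ₗ[ℝ] ℝ) (ξ : V) (η : V → ℝ)
    (lam μ p : ℝ)
    (hη : ∀ X, η X = g X ξ) (hηξ : η ξ = 1)
    (hgsymm : ∀ X Y, g X Y = g Y X)
    (hS : ∀ X Y, S X Y = (2 * (n : ℝ) - 1 - lam + (1 / 2) * (p + 2 / (2 * (n : ℝ) + 1))) * g X Y
        - (μ - 1) * η X * η Y)
    (hlm : lam + μ = (1 / 2) * (p + 2 / (2 * (n : ℝ) + 1)))
    (hnd : ∃ X Y, g X Y - η X * η Y ≠ 0)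
    -- R(ξ,X)·S = 0, where R(ξ,X)Y = g(X,Y)ξ - η(Y)X on a Sasakian manifold
    (hcond : ∀ X Y Z : V,
      S (g X Y • ξ - η Y • X) Z + S Y (g X Z • ξ - η Z • X) = 0) :
    ∀ X Y, S X Y = 2 * (n : ℝ) * g X Y := by
  have hlam : lam = (1 / 2) * (p + 2 / (2 * (n : ℝ) + 1)) - μ := by linarith
  obtain ⟨X0, Y0, h0⟩ := hnd
  have key := hcond X0 Y0 ξ
  simp only [map_sub, map_smul, LinearMap.sub_apply, LinearMap.smul_apply, smul_eq_mul] at key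
  rw [hS ξ ξ, hS X0 ξ, hS Y0 ξ, hS Y0 X0] at key
  have hgξξ : g ξ ξ = 1 := by rw [← hη ξ, hηξ]
  have hgX : g X0 ξ = η X0 := (hη X0).symm
  have hgY : g Y0 ξ = η Y0 := (hη Y0).symm
  have hgYX : g Y0 X0 = g X0 Y0 := hgsymm Y0 X0
  rw [hgξξ, hgX, hgY, hgYX, hηξ, hlam] at key
  have hkey : (μ - 1) * (g X0 Y0 - η X0 * η Y0) = 0 := by ring_nf; ring_nf at key; linarith
  have hμ : μ = 1 := by
    rcases mul_eq_zero.1 hkey with h | h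
    · linarith
    · exact absurd h h0
  intro X Y
  rw [hS X Y, hlam, hμ]
  ring
end

section
/- If a (2n+1)-dimensional Sasakian manifold admitting a *-conformal η-Ricci soliton satisfies S(ξ,X)·R = 0, then μ = 1 - 4n and λ = 4n + (1/2)(p + 2/(2n+1)) - 1. -/
/-- If a (2n+1)-dimensional Sasakian manifold admitting a *-conformal η-Ricci soliton
satisfies S(ξ,X)·R = 0, then μ = 1 - 4n and λ = 4n + (1/2)(p + 2/(2n+1)) - 1. -/
theorem ricci_derivation_curvature_vanishes_constants
    {V : Type*} [AddCommGroup V] [Module ℝ V] (n : ℕ) (hn : 1 ≤ n)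
    (g S : V →ₗ[ℝ] V →ₗ[ℝ] ℝ) (ξ : V) (η : V → ℝ)
    (R : V → V → V → V)
    (lam μ p : ℝ)
    (hη : ∀ X, η X = g X ξ) (hηξ : η ξ = 1)
    (hgsymm : ∀ X Y, g X Y = g Y X)
    -- Sasakian curvature identities
    (hR1 : ∀ X Y, R X Y ξ = η Y • X - η X • Y)
    (hR2 : ∀ X Y, R ξ X Y = g X Y • ξ - η Y • X)
    (hR3 : ∀ X Y Z, η (R X Y Z) = g Y Z * η X - g X Z * η Y)
    (hS : ∀ X Y, S X Y = (2 * (n : ℝ) - 1 - lam + (1 / 2) * (p + 2 / (2 * (n : ℝ) + 1))) * g X Y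
        - (μ - 1) * η X * η Y)
    (hlm : lam + μ = (1 / 2) * (p + 2 / (2 * (n : ℝ) + 1)))
    -- g(φ·,φ·) = g - η⊗η is not identically zero
    (hnd : ∃ X Y, g X Y - η X * η Y ≠ 0)
    -- the condition S(ξ,X)·R = 0
    (hcond : ∀ X Y Z W : V,
      S X (R Y Z W) • ξ - S ξ (R Y Z W) • X + S X Y • R ξ Z W - S ξ Y • R X Z W
        + S X Z • R Y ξ W - S ξ Z • R Y X W + S X W • R Y Z ξ - S ξ W • R Y Z X = 0) :
    μ = 1 - 4 * (n : ℝ) ∧ lam = 4 * (n : ℝ) + (1 / 2) * (p + 2 / (2 * (n : ℝ) + 1)) - 1 := by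
  obtain ⟨X, Y, hXY⟩ := hnd
  have hgξ : g ξ ξ = 1 := by rw [← hη]; exact hηξ
  have h := hcond X Y ξ ξ
  simp only [hR1, hR2] at h
  have h2 := congrArg (g.flip ξ) h
  rw [map_zero] at h2
  simp only [map_add, map_sub, map_smul, LinearMap.flip_apply, smul_eq_mul,
    LinearMap.map_sub, LinearMap.map_smul] at h2
  rw [← hη (R Y ξ X), hR3] at h2
  simp only [← hη, hηξ, hgξ] at h2
  simp only [LinearMap.map_sub, LinearMap.map_smul, smul_eq_mul, hS, hηξ, hgξ] at h2
  have key : (μ - 1 + 4 * (n : ℝ)) * (g X Y - η X * η Y) = 0 := by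
    simp only [hη, hgξ, hgsymm ξ X, hgsymm ξ Y] at h2 ⊢
    rw [hgsymm Y X] at h2
    linear_combination h2 + (2 * (g X) Y - 2 * (g X) ξ * (g Y) ξ) * hlm
  have hXY' : g X Y - η X * η Y ≠ 0 := hXY
  have hμ : μ = 1 - 4 * (n : ℝ) := by
    rcases mul_eq_zero.mp key with h | h
    · linarith
    · exact absurd h hXY'
  exact ⟨hμ, by linarith⟩
end

section
/- If a (2n+1)-dimensional Sasakian manifold admitting a *-conformal η-Ricci soliton satisfies S(ξ,X)·R = 0, then it is η-Einstein with S(X,Y) = -2n g(X,Y) + 4n η(X)η(Y). -/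
/-- If a (2n+1)-dimensional Sasakian manifold admitting a *-conformal η-Ricci soliton
satisfies S(ξ,X)·R = 0, then it is η-Einstein: S(X,Y) = -2n g(X,Y) + 4n η(X)η(Y). -/
theorem ricci_derivation_curvature_vanishes_eta_einstein
    {V : Type*} [AddCommGroup V] [Module ℝ V] (n : ℕ) (hn : 1 ≤ n)
    (g S : V →ₗ[ℝ] V →ₗ[ℝ] ℝ) (ξ : V) (η : V → ℝ)
    (R : V → V → V → V)
    (lam μ p : ℝ)
    (hη : ∀ X, η X = g X ξ) (hηξ : η ξ = 1)
    (hgsymm : ∀ X Y, g X Y = g Y X)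
    (hR1 : ∀ X Y, R X Y ξ = η Y • X - η X • Y)
    (hR2 : ∀ X Y, R ξ X Y = g X Y • ξ - η Y • X)
    (hR3 : ∀ X Y Z, η (R X Y Z) = g Y Z * η X - g X Z * η Y)
    (hS : ∀ X Y, S X Y = (2 * (n : ℝ) - 1 - lam + (1 / 2) * (p + 2 / (2 * (n : ℝ) + 1))) * g X Y
        - (μ - 1) * η X * η Y)
    (hlm : lam + μ = (1 / 2) * (p + 2 / (2 * (n : ℝ) + 1)))
    (hnd : ∃ X Y, g X Y - η X * η Y ≠ 0)
    (hcond : ∀ X Y Z W : V,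
      S X (R Y Z W) • ξ - S ξ (R Y Z W) • X + S X Y • R ξ Z W - S ξ Y • R X Z W
        + S X Z • R Y ξ W - S ξ Z • R Y X W + S X W • R Y Z ξ - S ξ W • R Y Z X = 0) :
    ∀ X Y, S X Y = -(2 * (n : ℝ)) * g X Y + 4 * (n : ℝ) * η X * η Y := by
  intro X Y
  have hgξ : ∀ Z, g Z ξ = η Z := fun Z => (hη Z).symm
  have hSZξ : ∀ Z, S Z ξ = 2 * (n:ℝ) * η Z := by
    intro Z
    rw [hS Z ξ, hgξ Z, hηξ]
    linear_combination (-(η Z)) * hlm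
  have hSξZ : ∀ Z, S ξ Z = 2 * (n:ℝ) * η Z := by
    intro Z
    rw [hS ξ Z, hgsymm ξ Z, hgξ Z, hηξ]
    linear_combination (-(η Z)) * hlm
  have h := hcond X Y ξ ξ
  rw [hR1 Y ξ, hR1 X ξ, hR1 Y X, hR2 ξ ξ] at h
  simp only [map_sub, map_smul, smul_eq_mul] at h
  have key := congrArg (fun v => g v ξ) h
  simp only [map_add, map_sub, map_smul, LinearMap.add_apply, LinearMap.sub_apply,
    LinearMap.smul_apply, smul_eq_mul, map_zero, LinearMap.zero_apply, hgξ, hηξ,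
    hSZξ, hSξZ] at key
  rw [hR3, hgsymm ξ X, hgξ X, hηξ, hgsymm Y X] at key
  linarith [key]
end

section
/- If a (2n+1)-dimensional Sasakian manifold admitting a *-conformal η-Ricci soliton satisfies P̄(ξ,X)·S = 0, where P̄ is the pseudo-projective curvature tensor with constants a, b ≠ 0, then either μ = 1 and λ = (1/2)(p + 2/(2n+1)) - 1, or the scalar curvature satisfies r = 2n(2n+1)a/(a + 2nb). -/
/-- If a (2n+1)-dimensional Sasakian manifold admitting a *-conformal η-Ricci soliton
satisfies P̄(ξ,X)·S = 0 for the pseudo-projective curvature tensor P̄ (constants a, b ≠ 0),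
then either μ = 1 and λ = (1/2)(p + 2/(2n+1)) - 1, or r = 2n(2n+1)a/(a + 2nb). -/
theorem pseudo_projective_derivation_ricci_vanishes
    {V : Type*} [AddCommGroup V] [Module ℝ V] (n : ℕ) (hn : 1 ≤ n)
    (g S : V →ₗ[ℝ] V →ₗ[ℝ] ℝ) (ξ : V) (η : V → ℝ)
    (R Pbar : V → V → V → V)
    (lam μ p r a b : ℝ) (ha : a ≠ 0) (hb : b ≠ 0)
    (hη : ∀ X, η X = g X ξ) (hηξ : η ξ = 1)
    (hgsymm : ∀ X Y, g X Y = g Y X)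
    -- Sasakian curvature identity R(ξ,X)Y = g(X,Y)ξ - η(Y)X
    (hR : ∀ X Y, R ξ X Y = g X Y • ξ - η Y • X)
    -- the pseudo-projective curvature tensor, r the scalar curvature
    (hPbar : ∀ X Y Z, Pbar X Y Z = a • R X Y Z + (b * S Y Z) • X - (b * S X Z) • Y
        - ((r / (2 * (n : ℝ) + 1)) * (a / (2 * (n : ℝ)) + b)) • (g Y Z • X - g X Z • Y))
    (hS : ∀ X Y, S X Y = (2 * (n : ℝ) - 1 - lam + (1 / 2) * (p + 2 / (2 * (n : ℝ) + 1))) * g X Y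
        - (μ - 1) * η X * η Y)
    (hlm : lam + μ = (1 / 2) * (p + 2 / (2 * (n : ℝ) + 1)))
    (hnd : ∃ X Y, g X Y - η X * η Y ≠ 0)
    -- the condition P̄(ξ,X)·S = 0
    (hcond : ∀ X Y Z : V, S (Pbar ξ X Y) Z + S Y (Pbar ξ X Z) = 0) :
    (μ = 1 ∧ lam = (1 / 2) * (p + 2 / (2 * (n : ℝ) + 1)) - 1)
      ∨ r = 2 * (n : ℝ) * (2 * (n : ℝ) + 1) * a / (a + 2 * (n : ℝ) * b) := by
  set N : ℝ := (n : ℝ) with hNdef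
  have hN1 : (1:ℝ) ≤ N := by rw [hNdef]; exact_mod_cast hn
  have hN0 : (2*N) ≠ 0 := by positivity
  have hN2 : (2*N+1) ≠ 0 := by positivity
  have hlam : lam = (1 / 2) * (p + 2 / (2 * N + 1)) - μ := by linarith
  subst hlam
  obtain ⟨X, Z, hXZ⟩ := hnd
  have h1 : g X ξ = η X := (hη X).symm
  have h1z : g Z ξ = η Z := (hη Z).symm
  have h2 : ∀ W, g ξ W = η W := fun W => (hgsymm ξ W).trans (hη W).symm
  have key := hcond X ξ Z
  rw [hPbar, hPbar, hR, hR] at key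
  simp only [map_add, map_sub, map_smul, LinearMap.add_apply, LinearMap.sub_apply,
    LinearMap.smul_apply, smul_eq_mul] at key
  simp only [hS, h1, h1z, h2, hηξ] at key
  have hc : (2*N - 1 - (1/2*(p + 2/(2*N+1)) - μ) + 1/2*(p + 2/(2*N+1))) = 2*N - 1 + μ := by ring
  rw [show ((2:ℝ)*N - 1 - (1/2*(p + 2/(2*N+1)) - μ) + 1/2*(p + 2/(2*N+1))) = 2*N - 1 + μ from by ring] at key
  set k : ℝ := r / (2*N+1) * (a/(2*N) + b) with hk
  by_cases hμ : μ = 1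
  · left
    exact ⟨hμ, by rw [hμ]⟩
  · right
    have main : (a - k) * (1-μ) * (g X Z - η X * η Z) = 0 := by
      linear_combination key
    have h1μ : (1:ℝ) - μ ≠ 0 := sub_ne_zero.mpr (fun h => hμ h.symm)
    have hA : a - k = 0 := by
      rcases mul_eq_zero.mp main with h | h
      · rcases mul_eq_zero.mp h with h | h
        · exact h
        · exact absurd h h1μ
      · exact absurd h hXZ
    rw [sub_eq_zero, hk] at hA
    have hab : a + 2*N*b ≠ 0 := by
      intro h0
      apply ha
      have hz : a/(2*N) + b = 0 := by
        field_simp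
        linarith [h0]
      rw [hA, hz, mul_zero]
    rw [eq_div_iff hab]
    field_simp at hA
    linarith [hA]
end

section
/- If a (2n+1)-dimensional Sasakian manifold admitting a *-conformal η-Ricci soliton is φ-conharmonically flat, then μ = -2n and λ = (1/2)(p + 2/(2n+1)) + 2n, and the manifold is η-Einstein with S(X,Y) = -g(X,Y) + (2n+1)η(X)η(Y). -/
/-- If a (2n+1)-dimensional Sasakian manifold admitting a *-conformal η-Ricci soliton is
φ-conharmonically flat, then μ = -2n, λ = (1/2)(p + 2/(2n+1)) + 2n, and the manifold
is η-Einstein with S(X,Y) = -g(X,Y) + (2n+1)η(X)η(Y). -/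
theorem phi_conharmonically_flat_soliton
    {V : Type*} [AddCommGroup V] [Module ℝ V] (n : ℕ) (hn : 1 ≤ n)
    (g S : V →ₗ[ℝ] V →ₗ[ℝ] ℝ) (ξ : V) (η : V → ℝ) (φ Q : V → V)
    (R H : V → V → V → V)
    (e : Fin (2 * n + 1) → V)  -- orthonormal frame {e₁, ..., e₂ₙ, ξ}
    (lam μ p r : ℝ)
    (hgsymm : ∀ X Y, g X Y = g Y X) (hSsymm : ∀ X Y, S X Y = S Y X)
    (hηξ : η ξ = 1) (hηφ : ∀ X, η (φ X) = 0)
    -- conharmonic curvature tensor, Q the Ricci operator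
    (hQ : ∀ X Y, g (Q X) Y = S X Y)
    (hH : ∀ X Y Z, H X Y Z = R X Y Z - (1 / (2 * (n : ℝ) - 1)) •
        (g Y Z • Q X - g X Z • Q Y + S Y Z • X - S X Z • Y))
    -- φ-conharmonically flat
    (hflat : ∀ X Y Z W, g (H (φ X) (φ Y) (φ Z)) (φ W) = 0)
    -- contraction identities over the orthonormal frame
    (hsum1 : ∑ i, g (φ (e i)) (φ (e i)) = 2 * (n : ℝ))
    (hsum2 : ∑ i, S (φ (e i)) (φ (e i)) = r - 2 * (n : ℝ))
    (hsum3 : ∀ Y Z, ∑ i, g (φ (e i)) (φ Z) * S (φ Y) (φ (e i)) = S (φ Y) (φ Z))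
    (hsum4 : ∀ Y Z, ∑ i, g (φ (e i)) (φ Z) * g (φ Y) (φ (e i)) = g (φ Y) (φ Z))
    (hsum5 : ∀ Y Z, ∑ i, g (R (φ (e i)) (φ Y) (φ Z)) (φ (e i)) = S (φ Y) (φ Z) - g (φ Y) (φ Z))
    -- the soliton data
    (hS : ∀ X Y, S X Y = (2 * (n : ℝ) - 1 - lam + (1 / 2) * (p + 2 / (2 * (n : ℝ) + 1))) * g X Y
        - (μ - 1) * η X * η Y)
    (hlm : lam + μ = (1 / 2) * (p + 2 / (2 * (n : ℝ) + 1)))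
    (hr : r = 2 * (n : ℝ) * (2 * (n : ℝ) + μ))
    -- φ is nonzero
    (hφnz : ∃ Y Z, g (φ Y) (φ Z) ≠ 0) :
    μ = -(2 * (n : ℝ)) ∧ lam = (1 / 2) * (p + 2 / (2 * (n : ℝ) + 1)) + 2 * (n : ℝ)
      ∧ ∀ X Y, S X Y = -g X Y + (2 * (n : ℝ) + 1) * η X * η Y := by
  have hn' : (1 : ℝ) ≤ (n : ℝ) := by exact_mod_cast hn
  have h2n1 : (2 * (n : ℝ) - 1) ≠ 0 := by nlinarith
  -- pointwise curvature identity from flatness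
  have hpt : ∀ X Y Z W, g (R (φ X) (φ Y) (φ Z)) (φ W) =
      (1 / (2 * (n : ℝ) - 1)) * (g (φ Y) (φ Z) * S (φ X) (φ W)
        - g (φ X) (φ Z) * S (φ Y) (φ W)
        + S (φ Y) (φ Z) * g (φ X) (φ W)
        - S (φ X) (φ Z) * g (φ Y) (φ W)) := by
    intro X Y Z W
    have h0 := hflat X Y Z W
    rw [hH] at h0
    simp only [map_sub, map_add, map_smul, LinearMap.sub_apply, LinearMap.add_apply,
      LinearMap.smul_apply, smul_eq_mul, hQ] at h0
    linarith
  -- trace the identity over the frame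
  have hkey : ∀ Y Z, S (φ Y) (φ Z) = (r - 1) * g (φ Y) (φ Z) := by
    intro Y Z
    have h1 : ∑ i, g (R (φ (e i)) (φ Y) (φ Z)) (φ (e i)) =
        ∑ i, (1 / (2 * (n : ℝ) - 1)) * (g (φ Y) (φ Z) * S (φ (e i)) (φ (e i))
          - g (φ (e i)) (φ Z) * S (φ Y) (φ (e i))
          + S (φ Y) (φ Z) * g (φ (e i)) (φ (e i))
          - S (φ (e i)) (φ Z) * g (φ Y) (φ (e i))) :=
      Finset.sum_congr rfl fun i _ => hpt (e i) Y Z (e i)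
    rw [hsum5] at h1
    have hA : ∑ i, g (φ Y) (φ Z) * S (φ (e i)) (φ (e i))
        = g (φ Y) (φ Z) * (r - 2 * (n : ℝ)) := by rw [← Finset.mul_sum, hsum2]
    have hC : ∑ i, S (φ Y) (φ Z) * g (φ (e i)) (φ (e i))
        = S (φ Y) (φ Z) * (2 * (n : ℝ)) := by rw [← Finset.mul_sum, hsum1]
    have hD : ∑ i, S (φ (e i)) (φ Z) * g (φ Y) (φ (e i)) = S (φ Y) (φ Z) := by
      have h3 := hsum3 Z Y
      calc ∑ i, S (φ (e i)) (φ Z) * g (φ Y) (φ (e i))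
          = ∑ i, g (φ (e i)) (φ Y) * S (φ Z) (φ (e i)) := by
            refine Finset.sum_congr rfl fun i _ => ?_
            rw [hSsymm, hgsymm]; ring
        _ = S (φ Z) (φ Y) := h3
        _ = S (φ Y) (φ Z) := hSsymm _ _
    have h4 : ∑ i, (1 / (2 * (n : ℝ) - 1)) * (g (φ Y) (φ Z) * S (φ (e i)) (φ (e i))
          - g (φ (e i)) (φ Z) * S (φ Y) (φ (e i))
          + S (φ Y) (φ Z) * g (φ (e i)) (φ (e i))
          - S (φ (e i)) (φ Z) * g (φ Y) (φ (e i)))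
        = (1 / (2 * (n : ℝ) - 1)) * (g (φ Y) (φ Z) * (r - 2 * (n : ℝ))
          - S (φ Y) (φ Z) + S (φ Y) (φ Z) * (2 * (n : ℝ)) - S (φ Y) (φ Z)) := by
      rw [← Finset.mul_sum]
      congr 1
      rw [Finset.sum_sub_distrib, Finset.sum_add_distrib, Finset.sum_sub_distrib,
        hA, hC, hD, hsum3 Y Z]
    rw [h4] at h1
    field_simp at h1
    linear_combination h1
  -- determine the coefficient from the soliton equation
  obtain ⟨Y, Z, hgz⟩ := hφnz
  have h5 := hS (φ Y) (φ Z)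
  rw [hηφ, hηφ] at h5
  have h6 : (2 * (n : ℝ) - 1 - lam + (1 / 2) * (p + 2 / (2 * (n : ℝ) + 1)))
      * g (φ Y) (φ Z) = (r - 1) * g (φ Y) (φ Z) := by
    rw [← hkey Y Z, h5]; ring
  have h7 : (2 * (n : ℝ) - 1 - lam + (1 / 2) * (p + 2 / (2 * (n : ℝ) + 1))) = r - 1 :=
    mul_right_cancel₀ hgz h6
  have h8 : (2 * (n : ℝ) - 1) * (μ + 2 * (n : ℝ)) = 0 := by
    linear_combination (-1 : ℝ) * h7 - hlm - hr
  have hmu : μ = -(2 * (n : ℝ)) := by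
    rcases mul_eq_zero.mp h8 with h | h
    · exact absurd h h2n1
    · linarith
  have hlam : lam = (1 / 2) * (p + 2 / (2 * (n : ℝ) + 1)) + 2 * (n : ℝ) := by
    rw [hmu] at hlm; linarith
  refine ⟨hmu, hlam, fun X Y => ?_⟩
  rw [hS X Y, hlam, hmu]; ring
end

section
/- If a (2n+1)-dimensional Sasakian manifold admitting a *-conformal η-Ricci soliton is φ-projectively flat, then μ = 1 and λ = (1/2)(p + 2/(2n+1)) - 1, and the manifold is Einstein with S(X,Y) = 2n g(X,Y). -/
/-- If a (2n+1)-dimensional Sasakian manifold admitting a *-conformal η-Ricci soliton is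
φ-projectively flat, then μ = 1, λ = (1/2)(p + 2/(2n+1)) - 1, and the manifold is
Einstein with S(X,Y) = 2n g(X,Y). -/
theorem phi_projectively_flat_soliton
    {V : Type*} [AddCommGroup V] [Module ℝ V] (n : ℕ) (hn : 1 ≤ n)
    (g S : V →ₗ[ℝ] V →ₗ[ℝ] ℝ) (ξ : V) (η : V → ℝ) (φ Q : V → V)
    (R P : V → V → V → V)
    (e : Fin (2 * n + 1) → V)  -- orthonormal frame {e₁, ..., e₂ₙ, ξ}
    (lam μ p r : ℝ)
    (hgsymm : ∀ X Y, g X Y = g Y X) (hSsymm : ∀ X Y, S X Y = S Y X)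
    (hηξ : η ξ = 1) (hηφ : ∀ X, η (φ X) = 0)
    -- projective curvature tensor, Q the Ricci operator
    (hQ : ∀ X Y, g (Q X) Y = S X Y)
    (hP : ∀ X Y Z, P X Y Z = R X Y Z - (1 / (2 * (n : ℝ))) •
        (g Y Z • Q X - g X Z • Q Y))
    -- φ-projectively flat
    (hflat : ∀ X Y Z W, g (P (φ X) (φ Y) (φ Z)) (φ W) = 0)
    -- contraction identities over the orthonormal frame
    (hsum1 : ∑ i, g (φ (e i)) (φ (e i)) = 2 * (n : ℝ))
    (hsum2 : ∑ i, S (φ (e i)) (φ (e i)) = r - 2 * (n : ℝ))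
    (hsum3 : ∀ Y Z, ∑ i, g (φ (e i)) (φ Z) * S (φ Y) (φ (e i)) = S (φ Y) (φ Z))
    (hsum4 : ∀ Y Z, ∑ i, g (φ (e i)) (φ Z) * g (φ Y) (φ (e i)) = g (φ Y) (φ Z))
    (hsum5 : ∀ Y Z, ∑ i, g (R (φ (e i)) (φ Y) (φ Z)) (φ (e i)) = S (φ Y) (φ Z) - g (φ Y) (φ Z))
    -- the soliton data
    (hS : ∀ X Y, S X Y = (2 * (n : ℝ) - 1 - lam + (1 / 2) * (p + 2 / (2 * (n : ℝ) + 1))) * g X Y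
        - (μ - 1) * η X * η Y)
    (hlm : lam + μ = (1 / 2) * (p + 2 / (2 * (n : ℝ) + 1)))
    (hr : r = 2 * (n : ℝ) * (2 * (n : ℝ) + μ))
    (hφnz : ∃ Y Z, g (φ Y) (φ Z) ≠ 0) :
    μ = 1 ∧ lam = (1 / 2) * (p + 2 / (2 * (n : ℝ) + 1)) - 1
      ∧ ∀ X Y, S X Y = 2 * (n : ℝ) * g X Y := by

  obtain ⟨Y, Z, hYZ⟩ := hφnz
  have hn1 : (1 : ℝ) ≤ (n : ℝ) := by exact_mod_cast hn
  have hn0 : (2 * (n : ℝ)) ≠ 0 := by positivity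
  -- S on φ-vectors is a multiple of g
  have hSphi : ∀ X W, S (φ X) (φ W) =
      (2 * (n : ℝ) - 1 - lam + (1 / 2) * (p + 2 / (2 * (n : ℝ) + 1))) * g (φ X) (φ W) := by
    intro X W
    rw [hS (φ X) (φ W), hηφ X]
    ring
  -- key curvature identity from flatness
  have key : ∀ X W, g (R (φ X) (φ Y) (φ Z)) (φ W) =
      (1 / (2 * (n : ℝ))) * (g (φ Y) (φ Z) * S (φ X) (φ W)
        - g (φ X) (φ Z) * S (φ Y) (φ W)) := by
    intro X W
    have h := hflat X Y Z W
    rw [hP] at h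
    simp only [map_sub, map_smul, LinearMap.sub_apply, LinearMap.smul_apply,
      smul_eq_mul, hQ] at h
    linarith [h]
  -- contract over the frame
  have hcontr : S (φ Y) (φ Z) - g (φ Y) (φ Z) =
      (1 / (2 * (n : ℝ))) * ((r - 2 * (n : ℝ)) * g (φ Y) (φ Z) - S (φ Y) (φ Z)) := by
    have h1 : ∑ i, g (R (φ (e i)) (φ Y) (φ Z)) (φ (e i)) =
        ∑ i, (1 / (2 * (n : ℝ))) * (g (φ Y) (φ Z) * S (φ (e i)) (φ (e i))
          - g (φ (e i)) (φ Z) * S (φ Y) (φ (e i))) := by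
      exact Finset.sum_congr rfl fun i _ => key (e i) (e i)
    rw [hsum5 Y Z] at h1
    rw [h1]
    rw [← Finset.mul_sum, Finset.sum_sub_distrib, ← Finset.mul_sum, hsum2, hsum3]
    ring
  -- turn into a scalar equation
  have ha : S (φ Y) (φ Z) = (2 * (n : ℝ) - 1 + μ) * g (φ Y) (φ Z) := by
    rw [hSphi Y Z]
    have hc : 2 * (n : ℝ) - 1 - lam + (1 / 2) * (p + 2 / (2 * (n : ℝ) + 1))
        = 2 * (n : ℝ) - 1 + μ := by linarith [hlm]
    rw [hc]
  have hscal : (2 * (n : ℝ) - 2 + μ) * g (φ Y) (φ Z) =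
      (1 / (2 * (n : ℝ))) * ((r - 2 * (n : ℝ)) - (2 * (n : ℝ) - 1 + μ)) * g (φ Y) (φ Z) := by
    rw [ha] at hcontr
    linarith [hcontr]
  have heq : (2 * (n : ℝ) - 2 + μ) =
      (1 / (2 * (n : ℝ))) * ((r - 2 * (n : ℝ)) - (2 * (n : ℝ) - 1 + μ)) :=
    mul_right_cancel₀ hYZ hscal
  have hμ : μ = 1 := by
    rw [hr] at heq
    field_simp at heq
    nlinarith [heq, sq_nonneg ((n : ℝ) - 1)]
  refine ⟨hμ, by linarith [hlm], fun X W => ?_⟩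
  rw [hS X W, hμ]
  have : 2 * (n : ℝ) - 1 - lam + (1 / 2) * (p + 2 / (2 * (n : ℝ) + 1)) = 2 * (n : ℝ) := by
    linarith [hlm, hμ]
  rw [this]; ring
end

section
/- Suppose a symmetric bilinear form S on a vector space with inner product g has the form S(X,Y) = α g(X,Y) + β η(X)η(Y), where η(X) = g(X,ξ), g(ξ,ξ) = 1. If S(R(ξ,X)Y, Z) + S(Y, R(ξ,X)Z) = 0 for all X, Y, Z, where R(ξ,X)Y = g(X,Y)ξ - η(Y)X, and g - η⊗η is not identically zero, then β = 0. -/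
open scoped RealInnerProductSpace

/-- Pointwise linear-algebraic core of Theorem 4.1: if S = α g + β η⊗η satisfies
S(R(ξ,X)Y, Z) + S(Y, R(ξ,X)Z) = 0 with R(ξ,X)Y = g(X,Y)ξ - η(Y)X, and g - η⊗η is not
identically zero, then β = 0. -/
theorem pointwise_core_beta_zero
    {V : Type*} [NormedAddCommGroup V] [InnerProductSpace ℝ V]
    (ξ : V) (hξ : ⟪ξ, ξ⟫ = 1)
    (η : V → ℝ) (hη : ∀ X, η X = ⟪X, ξ⟫)
    (S : V → V → ℝ) (α β : ℝ)
    (hS : ∀ X Y, S X Y = α * ⟪X, Y⟫ + β * η X * η Y)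
    (hcond : ∀ X Y Z : V,
      S (⟪X, Y⟫ • ξ - η Y • X) Z + S Y (⟪X, Z⟫ • ξ - η Z • X) = 0)
    (hnd : ∃ X Y : V, ⟪X, Y⟫ - η X * η Y ≠ 0) :
    β = 0 := by
  obtain ⟨X, Y, h⟩ := hnd
  have key := hcond X Y ξ
  simp only [hS, hη, inner_sub_left, inner_sub_right, real_inner_smul_left, real_inner_smul_right, one_smul, hξ] at key
  have hβ : β * (⟪X, Y⟫ - ⟪X, ξ⟫ * ⟪Y, ξ⟫) = 0 := by
    rw [real_inner_comm Y X] at key ⊢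
    ring_nf at key ⊢
    linarith
  have h' : ⟪X, Y⟫ - ⟪X, ξ⟫ * ⟪Y, ξ⟫ ≠ 0 := by rw [hη, hη] at h; exact h
  exact (mul_eq_zero.mp hβ).resolve_right h'
end

section
/- On a (2n+1)-dimensional φ-conharmonically flat Sasakian manifold, the Ricci tensor satisfies S(φY, φZ) = (r - 1) g(φY, φZ) for all vector fields Y, Z, where r is the scalar curvature. -/
/-- On a (2n+1)-dimensional φ-conharmonically flat Sasakian manifold,
S(φY, φZ) = (r - 1) g(φY, φZ), where r is the scalar curvature. -/
theorem phi_conharmonically_flat_ricci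
    {V : Type*} [AddCommGroup V] [Module ℝ V] (n : ℕ) (hn : 1 ≤ n)
    (g S : V →ₗ[ℝ] V →ₗ[ℝ] ℝ) (ξ : V) (φ Q : V → V)
    (R H : V → V → V → V)
    (e : Fin (2 * n + 1) → V)  -- orthonormal frame {e₁, ..., e₂ₙ, ξ}
    (r : ℝ)
    (hgsymm : ∀ X Y, g X Y = g Y X) (hSsymm : ∀ X Y, S X Y = S Y X)
    -- conharmonic curvature tensor, Q the Ricci operator
    (hQ : ∀ X Y, g (Q X) Y = S X Y)
    (hH : ∀ X Y Z, H X Y Z = R X Y Z - (1 / (2 * (n : ℝ) - 1)) •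
        (g Y Z • Q X - g X Z • Q Y + S Y Z • X - S X Z • Y))
    -- φ-conharmonically flat
    (hflat : ∀ X Y Z W, g (H (φ X) (φ Y) (φ Z)) (φ W) = 0)
    -- contraction identities over the orthonormal frame
    (hsum1 : ∑ i, g (φ (e i)) (φ (e i)) = 2 * (n : ℝ))
    (hsum2 : ∑ i, S (φ (e i)) (φ (e i)) = r - 2 * (n : ℝ))
    (hsum3 : ∀ Y Z, ∑ i, g (φ (e i)) (φ Z) * S (φ Y) (φ (e i)) = S (φ Y) (φ Z))
    (hsum4 : ∀ Y Z, ∑ i, g (φ (e i)) (φ Z) * g (φ Y) (φ (e i)) = g (φ Y) (φ Z))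
    (hsum5 : ∀ Y Z, ∑ i, g (R (φ (e i)) (φ Y) (φ Z)) (φ (e i)) = S (φ Y) (φ Z) - g (φ Y) (φ Z)) :
    ∀ Y Z, S (φ Y) (φ Z) = (r - 1) * g (φ Y) (φ Z) := by
  intro Y Z
  have h2n : (2 * (n : ℝ) - 1) ≠ 0 := by
    have h1 : (1 : ℝ) ≤ (n : ℝ) := by exact_mod_cast hn
    intro h; nlinarith
  have key : ∀ i : Fin (2 * n + 1),
      g (R (φ (e i)) (φ Y) (φ Z)) (φ (e i)) =
        (1 / (2 * (n : ℝ) - 1)) *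
          (g (φ Y) (φ Z) * S (φ (e i)) (φ (e i)) -
            g (φ (e i)) (φ Z) * S (φ Y) (φ (e i)) +
            S (φ Y) (φ Z) * g (φ (e i)) (φ (e i)) -
            S (φ (e i)) (φ Z) * g (φ Y) (φ (e i))) := by
    intro i
    have h0 := hflat (e i) Y Z (e i)
    rw [hH] at h0
    simp only [map_sub, map_add, map_smul, LinearMap.sub_apply, LinearMap.add_apply,
      LinearMap.smul_apply, smul_eq_mul, hQ] at h0
    linear_combination h0
  have hA : ∑ i, g (φ Y) (φ Z) * S (φ (e i)) (φ (e i)) = g (φ Y) (φ Z) * (r - 2 * (n : ℝ)) := by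
    rw [← Finset.mul_sum, hsum2]
  have hC : ∑ i, S (φ Y) (φ Z) * g (φ (e i)) (φ (e i)) = S (φ Y) (φ Z) * (2 * (n : ℝ)) := by
    rw [← Finset.mul_sum, hsum1]
  have hB := hsum3 Y Z
  have hD : ∑ i, S (φ (e i)) (φ Z) * g (φ Y) (φ (e i)) = S (φ Y) (φ Z) := by
    have h1 : ∑ i, S (φ (e i)) (φ Z) * g (φ Y) (φ (e i)) =
        ∑ i, g (φ (e i)) (φ Y) * S (φ Z) (φ (e i)) := by
      refine Finset.sum_congr rfl fun i _ => ?_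
      rw [hSsymm (φ (e i)) (φ Z), hgsymm (φ Y) (φ (e i))]; ring
    rw [h1, hsum3 Z Y, hSsymm]
  have total : S (φ Y) (φ Z) - g (φ Y) (φ Z) =
      (1 / (2 * (n : ℝ) - 1)) *
        (g (φ Y) (φ Z) * (r - 2 * (n : ℝ)) - S (φ Y) (φ Z) +
          S (φ Y) (φ Z) * (2 * (n : ℝ)) - S (φ Y) (φ Z)) := by
    rw [← hsum5 Y Z, Finset.sum_congr rfl (fun i _ => key i), ← Finset.mul_sum,
      Finset.sum_sub_distrib, Finset.sum_add_distrib, Finset.sum_sub_distrib, hA, hB, hC, hD]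
  field_simp at total
  linear_combination total
end

section
/- On a (2n+1)-dimensional φ-projectively flat Sasakian manifold, the Ricci tensor satisfies S(φY, φZ) = (r/(2n+1)) g(φY, φZ) for all vector fields Y, Z, where r is the scalar curvature. -/
/-- On a (2n+1)-dimensional φ-projectively flat Sasakian manifold,
S(φY, φZ) = (r/(2n+1)) g(φY, φZ), where r is the scalar curvature. -/
theorem phi_projectively_flat_ricci
    {V : Type*} [AddCommGroup V] [Module ℝ V] (n : ℕ) (hn : 1 ≤ n)
    (g S : V →ₗ[ℝ] V →ₗ[ℝ] ℝ) (ξ : V) (φ Q : V → V)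
    (R P : V → V → V → V)
    (e : Fin (2 * n + 1) → V)  -- orthonormal frame {e₁, ..., e₂ₙ, ξ}
    (r : ℝ)
    (hgsymm : ∀ X Y, g X Y = g Y X) (hSsymm : ∀ X Y, S X Y = S Y X)
    -- projective curvature tensor, Q the Ricci operator
    (hQ : ∀ X Y, g (Q X) Y = S X Y)
    (hP : ∀ X Y Z, P X Y Z = R X Y Z - (1 / (2 * (n : ℝ))) •
        (g Y Z • Q X - g X Z • Q Y))
    -- φ-projectively flat
    (hflat : ∀ X Y Z W, g (P (φ X) (φ Y) (φ Z)) (φ W) = 0)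
    -- contraction identities over the orthonormal frame
    (hsum1 : ∑ i, g (φ (e i)) (φ (e i)) = 2 * (n : ℝ))
    (hsum2 : ∑ i, S (φ (e i)) (φ (e i)) = r - 2 * (n : ℝ))
    (hsum3 : ∀ Y Z, ∑ i, g (φ (e i)) (φ Z) * S (φ Y) (φ (e i)) = S (φ Y) (φ Z))
    (hsum4 : ∀ Y Z, ∑ i, g (φ (e i)) (φ Z) * g (φ Y) (φ (e i)) = g (φ Y) (φ Z))
    (hsum5 : ∀ Y Z, ∑ i, g (R (φ (e i)) (φ Y) (φ Z)) (φ (e i)) = S (φ Y) (φ Z) - g (φ Y) (φ Z)) :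
    ∀ Y Z, S (φ Y) (φ Z) = (r / (2 * (n : ℝ) + 1)) * g (φ Y) (φ Z) := by
  intro Y Z
  have hn' : (2 * (n : ℝ)) ≠ 0 := by
    have : (1:ℝ) ≤ (n:ℝ) := by exact_mod_cast hn
    positivity
  have key : ∀ X W, g (R (φ X) (φ Y) (φ Z)) (φ W) =
      (1 / (2 * (n : ℝ))) * (g (φ Y) (φ Z) * S (φ X) (φ W)
        - g (φ X) (φ Z) * S (φ Y) (φ W)) := by
    intro X W
    have h := hflat X Y Z W
    rw [hP] at h
    simp only [map_sub, map_smul, hQ, smul_eq_mul, LinearMap.sub_apply,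
      LinearMap.smul_apply] at h
    linarith
  have h1 : ∑ i, g (R (φ (e i)) (φ Y) (φ Z)) (φ (e i)) =
      ∑ i, (1 / (2 * (n : ℝ))) * (g (φ Y) (φ Z) * S (φ (e i)) (φ (e i))
        - g (φ (e i)) (φ Z) * S (φ Y) (φ (e i))) :=
    Finset.sum_congr rfl fun i _ => key (e i) (e i)
  rw [hsum5] at h1
  rw [← Finset.mul_sum, Finset.sum_sub_distrib, ← Finset.mul_sum, hsum2, hsum3] at h1
  have h2 : S (φ Y) (φ Z) - g (φ Y) (φ Z) =
      (1 / (2 * (n : ℝ))) * (g (φ Y) (φ Z) * (r - 2 * n) - S (φ Y) (φ Z)) := h1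
  field_simp at h2 ⊢
  nlinarith [h2]
end
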